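/- arXiv:1910.00849 — 3 statements merged into one kernel-verified Lean document; each statement's English description precedes it below -/
import Mathlib

section
/- The standard supervisory controller synthesis function f, defined by f(K, R) = (K', R') where T_{K'} = T_K \ { (q → q') ∈ T_K | q' ∈ R ∨ q is forbidden } and R' = R ∪ { q | (q → q') ∈ T_A^□, q' ∈ R } ∪ Dangling(K'), is monotone on the cpo of pairs (sub-automaton of A, subset of states) ordered by (K,R) ≤ (K',R') iff T_{K'} ⊆ T_K and R ⊆ R'. -/
structure Auto (Q L : Type) where
  q0 : Q
  T : Set (Q × L × Q)
  F : Set Q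

def stepRel {Q L : Type} (T : Set (Q × L × Q)) (q q' : Q) : Prop :=
  ∃ a, (q, a, q') ∈ T

def ReachT {Q L : Type} (T : Set (Q × L × Q)) : Q → Q → Prop :=
  Relation.ReflTransGen (stepRel T)

def DanglingT {Q L : Type} (q0 : Q) (F : Set Q) (T : Set (Q × L × Q)) (q : Q) : Prop :=
  ¬ ReachT T q0 q ∨ ¬ ∃ qf ∈ F, ReachT T q qf

def pairLe {α β : Type} (p p' : Set α × Set β) : Prop :=
  p'.1 ⊆ p.1 ∧ p.2 ⊆ p'.2

/-- Standard supervisory controller synthesis step: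
prune transitions with target in `R` or forbidden source, and add to `R`
sources of uncontrollable transitions of `A` with target in `R`, plus the
dangling states of the pruned automaton. -/
def mpcF {Q L : Type} (A : Auto Q L) (Tunc : Set (Q × L × Q)) (Forb : Set Q)
    (p : Set (Q × L × Q) × Set Q) : Set (Q × L × Q) × Set Q :=
  let TK' := {t ∈ p.1 | ¬ (t.2.2 ∈ p.2 ∨ t.1 ∈ Forb)}
  (TK', p.2 ∪ {q | ∃ a q', (q, a, q') ∈ Tunc ∧ q' ∈ p.2}
            ∪ {q | DanglingT A.q0 A.F TK' q})

/-! Removing transitions can only destroy paths, so it can only create dangling states. Shrinking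
`T_K` and growing `R` shrinks the pruned transition set, hence `R'` grows on all three of its parts. -/

def prunedT {Q L : Type} (Forb : Set Q) (T : Set (Q × L × Q)) (R : Set Q) : Set (Q × L × Q) :=
  {t ∈ T | ¬ (t.2.2 ∈ R ∨ t.1 ∈ Forb)}

theorem prunedT_mono {Q L : Type} (Forb : Set Q) {T T' : Set (Q × L × Q)} {R R' : Set Q}
    (hT : T' ⊆ T) (hR : R ⊆ R') : prunedT Forb T' R' ⊆ prunedT Forb T R :=
  fun _ ⟨ht, hn⟩ => ⟨hT ht, fun h => hn (h.imp (@hR _) id)⟩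

theorem ReachT.mono {Q L : Type} {T T' : Set (Q × L × Q)} (hT : T ⊆ T') {q q' : Q}
    (h : ReachT T q q') : ReachT T' q q' :=
  Relation.ReflTransGen.mono (fun _ _ ⟨a, ha⟩ => ⟨a, hT ha⟩) _ _ h

theorem DanglingT.anti {Q L : Type} {q0 : Q} {F : Set Q} {T T' : Set (Q × L × Q)}
    (hT : T ⊆ T') {q : Q} (h : DanglingT q0 F T' q) : DanglingT q0 F T q :=
  h.imp (mt (ReachT.mono hT)) (mt fun ⟨qf, hf, hr⟩ => ⟨qf, hf, hr.mono hT⟩)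

theorem uncontrollablePre_mono {Q L : Type} (Tunc : Set (Q × L × Q)) {R R' : Set Q}
    (hR : R ⊆ R') :
    {q | ∃ a q', (q, a, q') ∈ Tunc ∧ q' ∈ R} ⊆ {q | ∃ a q', (q, a, q') ∈ Tunc ∧ q' ∈ R'} :=
  fun _ ⟨a, q', ht, hq'⟩ => ⟨a, q', ht, hR hq'⟩

theorem stmt3_general {Q L : Type} (A : Auto Q L)
    (Tunc : Set (Q × L × Q)) (Forb : Set Q) :
    ∀ p p', pairLe p p' → pairLe (mpcF A Tunc Forb p) (mpcF A Tunc Forb p') := by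
  rintro p p' ⟨hT, hR⟩
  have hpruned : prunedT Forb p'.1 p'.2 ⊆ prunedT Forb p.1 p.2 := prunedT_mono Forb hT hR
  exact ⟨hpruned, Set.union_subset_union
    (Set.union_subset_union hR (uncontrollablePre_mono Tunc hR))
    fun _ => DanglingT.anti hpruned⟩

/-- The standard supervisory controller synthesis function is monotone on the
cpo of pairs ordered by `(K,R) ≤ (K',R') ↔ T_{K'} ⊆ T_K ∧ R ⊆ R'`. -/
theorem stmt3 {Q L : Type} [Fintype Q] [Fintype L] (A : Auto Q L)
    (Tunc : Set (Q × L × Q)) (hTunc : Tunc ⊆ A.T) (Forb : Set Q) :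
    ∀ p p', pairLe p p' → pairLe (mpcF A Tunc Forb p) (mpcF A Tunc Forb p') :=
  stmt3_general A Tunc Forb
end

section
/- Let (K_s, R_s) be the least fixed point of the standard synthesis function f starting from (A, Dangling(A)), and suppose the initial state q0 ∉ R_s. Then the resulting controller K (obtained from K_s by removing the states in R_s) is non-blocking: every state of K that is reachable from q0 in K can reach a final state in K. -/
theorem ReachT.restrict_of_forall_target_notMem {Q L : Type} {T : Set (Q × L × Q)} {R : Set Q}
    (hT : ∀ t ∈ T, t.2.2 ∉ R) {q q' : Q} (h : ReachT T q q') (hq : q ∉ R) :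
    ReachT {t ∈ T | t.1 ∉ R ∧ t.2.2 ∉ R} q q' ∧ q' ∉ R := by
  induction h with
  | refl => exact ⟨Relation.ReflTransGen.refl, hq⟩
  | tail _ hstep ih =>
    obtain ⟨a, ha⟩ := hstep
    have htarget := hT _ ha
    exact ⟨ih.1.tail ⟨a, ha, ih.2, htarget⟩, htarget⟩

section FixedPoint

variable {Q L : Type} {A : Auto Q L} {Tunc : Set (Q × L × Q)} {Forb : Set Q}
  {K : Set (Q × L × Q)} {R : Set Q}

theorem target_notMem_of_mpcF_eq_self (hfix : mpcF A Tunc Forb (K, R) = (K, R))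
    {t : Q × L × Q} (ht : t ∈ K) : t.2.2 ∉ R := by
  have hK : {t ∈ K | ¬ (t.2.2 ∈ R ∨ t.1 ∈ Forb)} = K := congrArg Prod.fst hfix
  rw [← hK] at ht
  exact fun h => ht.2 (Or.inl h)

theorem mem_of_danglingT_of_mpcF_eq_self (hfix : mpcF A Tunc Forb (K, R) = (K, R))
    {q : Q} (hq : DanglingT A.q0 A.F K q) : q ∈ R := by
  have hK : {t ∈ K | ¬ (t.2.2 ∈ R ∨ t.1 ∈ Forb)} = K := congrArg Prod.fst hfix
  have hR := congrArg Prod.snd hfix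
  simp only [mpcF, hK] at hR
  exact hR ▸ Or.inr hq

end FixedPoint

theorem stmt4_general {Q L : Type} (A : Auto Q L)
    (Tunc : Set (Q × L × Q)) (Forb : Set Q)
    (Ks : Set (Q × L × Q)) (Rs : Set Q)
    (hfix : mpcF A Tunc Forb (Ks, Rs) = (Ks, Rs))
    (h0 : A.q0 ∉ Rs) :
    ∀ q, ReachT {t ∈ Ks | t.1 ∉ Rs ∧ t.2.2 ∉ Rs} A.q0 q →
      ∃ qf, qf ∈ A.F ∧ qf ∉ Rs ∧ ReachT {t ∈ Ks | t.1 ∉ Rs ∧ t.2.2 ∉ Rs} q qf := by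
  intro q hq
  have htarget : ∀ t ∈ Ks, t.2.2 ∉ Rs := fun _ => target_notMem_of_mpcF_eq_self hfix
  have hreach : ReachT Ks A.q0 q := hq.mono fun _ ht => ht.1
  have hqR : q ∉ Rs := (ReachT.restrict_of_forall_target_notMem htarget hreach h0).2
  obtain ⟨qf, hqf, hpath⟩ : ∃ qf ∈ A.F, ReachT Ks q qf := by
    by_contra h
    exact hqR (mem_of_danglingT_of_mpcF_eq_self hfix (Or.inr h))
  obtain ⟨hpath', hqfR⟩ := ReachT.restrict_of_forall_target_notMem htarget hpath hqR
  exact ⟨qf, hqf, hqfR, hpath'⟩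

/-- Non-blockingness of the standard synthesised controller: every state of
the controller (the least fixed point `K_s` restricted to states outside
`R_s`) reachable from the initial state can reach a final state within the
controller. -/
theorem stmt4 {Q L : Type} [Fintype Q] [Fintype L] (A : Auto Q L)
    (Tunc : Set (Q × L × Q)) (hTunc : Tunc ⊆ A.T) (Forb : Set Q)
    (Ks : Set (Q × L × Q)) (Rs : Set Q)
    (hiter : ∃ k, (mpcF A Tunc Forb)^[k] (A.T, {q | DanglingT A.q0 A.F A.T q}) = (Ks, Rs))
    (hfix : mpcF A Tunc Forb (Ks, Rs) = (Ks, Rs))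
    (h0 : A.q0 ∉ Rs) :
    ∀ q, ReachT {t ∈ Ks | t.1 ∉ Rs ∧ t.2.2 ∉ Rs} A.q0 q →
      ∃ qf, qf ∈ A.F ∧ qf ∉ Rs ∧ ReachT {t ∈ Ks | t.1 ∉ Rs ∧ t.2.2 ∉ Rs} q qf :=
  stmt4_general A Tunc Forb Ks Rs hfix h0
end

section
/- Let (K_s, R_s) be the least fixed point of the standard synthesis function f starting from (A, Dangling(A)), with q0 ∉ R_s. Then the resulting controller is controllable: for every uncontrollable transition (q, a, q') of A whose source q is a (reachable, non-removed) state of the controller, the target q' is not in R_s; equivalently, the controller never disables an uncontrollable transition of A from one of its reachable states by having pruned it. -/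
theorem mpcF_snd_mem_of_uncontrollable {Q L : Type} (A : Auto Q L) (Tunc : Set (Q × L × Q))
    (Forb : Set Q) (p : Set (Q × L × Q) × Set Q) {q : Q} {a : L} {q' : Q}
    (hunc : (q, a, q') ∈ Tunc) (hq' : q' ∈ p.2) : q ∈ (mpcF A Tunc Forb p).2 :=
  Or.inl (Or.inr ⟨a, q', hunc, hq'⟩)

theorem stmt6_general {Q L : Type} (A : Auto Q L)
    (Tunc : Set (Q × L × Q)) (Forb : Set Q)
    (Ks : Set (Q × L × Q)) (Rs : Set Q)
    (hfix : mpcF A Tunc Forb (Ks, Rs) = (Ks, Rs)) :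
    ∀ q a q', (q, a, q') ∈ Tunc →
      ReachT {t ∈ Ks | t.1 ∉ Rs ∧ t.2.2 ∉ Rs} A.q0 q → q ∉ Rs → q' ∉ Rs := by
  intro q a q' hunc _ hq hq'
  have hRs : (mpcF A Tunc Forb (Ks, Rs)).2 = Rs := by rw [hfix]
  exact hq (hRs ▸ mpcF_snd_mem_of_uncontrollable A Tunc Forb (Ks, Rs) hunc hq')

/-- Controllability of the standard synthesised controller: for every
uncontrollable transition `(q,a,q')` of `A` whose source `q` is a reachable,
non-removed state of the controller, the target `q'` is not in `R_s`. -/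
theorem stmt6 {Q L : Type} [Fintype Q] [Fintype L] (A : Auto Q L)
    (Tunc : Set (Q × L × Q)) (hTunc : Tunc ⊆ A.T) (Forb : Set Q)
    (Ks : Set (Q × L × Q)) (Rs : Set Q)
    (hiter : ∃ k, (mpcF A Tunc Forb)^[k] (A.T, {q | DanglingT A.q0 A.F A.T q}) = (Ks, Rs))
    (hfix : mpcF A Tunc Forb (Ks, Rs) = (Ks, Rs))
    (h0 : A.q0 ∉ Rs) :
    ∀ q a q', (q, a, q') ∈ Tunc →
      ReachT {t ∈ Ks | t.1 ∉ Rs ∧ t.2.2 ∉ Rs} A.q0 q → q ∉ Rs → q' ∉ Rs :=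
  stmt6_general A Tunc Forb Ks Rs hfix
end
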